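/- arXiv:2001.09529 — 3 statements merged into one kernel-verified Lean document; each statement's English description precedes it below -/
import Mathlib

section
/- Let A : ℝ² → ℝ² be a homeomorphism with a fixed point x, and suppose for all ε₁, ε₂ > 0 there exists n₀ such that |A⁻ⁿ(u) − A⁻ⁿ(v)| ≤ ε₁|u − v| + ε₂ for all u, v ∈ ℝ² and n ≥ n₀. Then for every open neighborhood U of x, ⋃_{n∈ℕ₀} Aⁿ(U) = ℝ². -/
/-! Backward orbits are asymptotically contracted onto the fixed point `x`, so every backward
orbit converges to `x` and therefore eventually enters `U`; applying the same number of forward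
iterates brings that point back to where the orbit started. -/

noncomputable abbrev E := EuclideanSpace ℝ (Fin 2)

open Filter Topology

theorem tendsto_iterate_nhds_of_eventually_contracting {X : Type*} [PseudoMetricSpace X]
    {f : X → X} {x : X} (hx : f x = x)
    (hf : ∀ ε₁ ε₂ : ℝ, 0 < ε₁ → 0 < ε₂ → ∃ n₀ : ℕ, ∀ n : ℕ, n₀ ≤ n → ∀ u v : X,
      dist (f^[n] u) (f^[n] v) ≤ ε₁ * dist u v + ε₂)
    (y : X) : Tendsto (fun n ↦ f^[n] y) atTop (𝓝 x) := by
  refine Metric.tendsto_atTop.2 fun ε hε ↦ ?_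
  set d := dist y x
  have hd : 0 < d + 1 := by positivity
  obtain ⟨n₀, hn₀⟩ := hf (ε / (2 * (d + 1))) (ε / 2) (by positivity) (by positivity)
  refine ⟨n₀, fun n hn ↦ ?_⟩
  calc dist (f^[n] y) x = dist (f^[n] y) (f^[n] x) := by rw [Function.iterate_fixed hx]
    _ ≤ ε / (2 * (d + 1)) * d + ε / 2 := hn₀ n hn y x
    _ < ε / (2 * (d + 1)) * (d + 1) + ε / 2 := by gcongr; linarith
    _ = ε := by field_simp; ring

theorem stmt5 (A : Homeomorph E E) (x : E) (hfix : A x = x)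
    (hcontr : ∀ ε₁ ε₂ : ℝ, 0 < ε₁ → 0 < ε₂ → ∃ n₀ : ℕ, ∀ n : ℕ, n₀ ≤ n → ∀ u v : E,
      ‖(⇑A.symm)^[n] u - (⇑A.symm)^[n] v‖ ≤ ε₁ * ‖u - v‖ + ε₂)
    (U : Set E) (hU : IsOpen U) (hxU : x ∈ U) :
    ⋃ n : ℕ, (⇑A)^[n] '' U = Set.univ := by
  refine Set.eq_univ_of_forall fun y ↦ ?_
  have hback : Tendsto (fun n ↦ (⇑A.symm)^[n] y) atTop (𝓝 x) :=
    tendsto_iterate_nhds_of_eventually_contracting (A.symm_apply_eq.2 hfix.symm)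
      (by simpa only [dist_eq_norm] using hcontr) y
  obtain ⟨n, hn⟩ := (hback.eventually (hU.mem_nhds hxU)).exists
  exact Set.mem_iUnion.2 ⟨n, _, hn, A.rightInverse_symm.iterate n y⟩
end

section
/- Let A : ℝ² → ℝ² be a homeomorphism with a fixed point x, satisfying: for all ε₁, ε₂ > 0 there exists n₀ such that |A⁻ⁿ(u) − A⁻ⁿ(v)| ≤ ε₁|u − v| + ε₂ for all u, v ∈ ℝ² and n ≥ n₀. Then for every bounded open neighborhood U of x, there exists N such that U ⊆ Aⁿ(U) for all n ≥ N. -/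
open Set Filter Metric Bornology

theorem eventually_mapsTo_ball_of_asymptotic_contraction {X : Type*} [PseudoMetricSpace X]
    {g : X → X} {x : X} (hx : g x = x)
    (hg : ∀ ε₁ ε₂ : ℝ, 0 < ε₁ → 0 < ε₂ → ∃ n₀ : ℕ, ∀ n : ℕ, n₀ ≤ n → ∀ u v : X,
      dist (g^[n] u) (g^[n] v) ≤ ε₁ * dist u v + ε₂)
    {S : Set X} (hS : IsBounded S) {ε : ℝ} (hε : 0 < ε) :
    ∀ᶠ n in atTop, MapsTo g^[n] S (ball x ε) := by
  obtain ⟨r, hr, hSr⟩ := hS.subset_closedBall_lt 0 x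
  obtain ⟨n₀, hn₀⟩ := hg (ε / (2 * r)) (ε / 3) (by positivity) (by positivity)
  filter_upwards [eventually_ge_atTop n₀] with n hn u hu
  calc dist (g^[n] u) x = dist (g^[n] u) (g^[n] x) := by rw [Function.iterate_fixed hx]
    _ ≤ ε / (2 * r) * dist u x + ε / 3 := hn₀ n hn u x
    _ ≤ ε / (2 * r) * r + ε / 3 := by gcongr; exact hSr hu
    _ < ε := by field_simp; linarith

theorem stmt6 (A : Homeomorph E E) (x : E) (hfix : A x = x)
    (hcontr : ∀ ε₁ ε₂ : ℝ, 0 < ε₁ → 0 < ε₂ → ∃ n₀ : ℕ, ∀ n : ℕ, n₀ ≤ n → ∀ u v : E,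
      ‖(⇑A.symm)^[n] u - (⇑A.symm)^[n] v‖ ≤ ε₁ * ‖u - v‖ + ε₂)
    (U : Set E) (hU : IsOpen U) (hxU : x ∈ U) (hbdd : Bornology.IsBounded U) :
    ∃ N : ℕ, ∀ n : ℕ, N ≤ n → U ⊆ (⇑A)^[n] '' U := by
  obtain ⟨ε, hε, hball⟩ := Metric.isOpen_iff.1 hU x hxU
  have hsymm_fix : A.symm x = x := A.symm_apply_eq.2 hfix.symm
  obtain ⟨N, hN⟩ := eventually_atTop.1 <|
    eventually_mapsTo_ball_of_asymptotic_contraction hsymm_fix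
      (by simpa only [dist_eq_norm] using hcontr) hbdd hε
  exact ⟨N, fun n hn =>
    ((Function.LeftInverse.iterate A.apply_symm_apply n).leftInvOn U).surjOn
      ((hN n hn).mono_right hball)⟩
end

section
/- Let Θ : ℝ² → X be a continuous map into a metric space X with Θ ∘ τ_γ = Θ for all γ in a rank-2 lattice Γ, and suppose each fiber Θ⁻¹(p), p ∈ X, is a discrete subset of ℝ². Then for every ε > 0 there exists δ > 0 such that every connected set K ⊂ ℝ² with diam(Θ(K)) < δ satisfies diam(K) < ε. -/
open Filter Topology Metric

theorem AddSubgroup.exists_isCompact_add_mem {F : Type*} [NormedAddCommGroup F]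
    [NormedSpace ℝ F] [FiniteDimensional ℝ F] (Γ : AddSubgroup F)
    (hspan : Submodule.span ℝ (Γ : Set F) = ⊤) :
    ∃ C : Set F, IsCompact C ∧ ∀ m : F, ∃ γ ∈ Γ, m + γ ∈ C := by
  obtain ⟨s, hsΓ, hs_span, hs_li⟩ := exists_linearIndependent ℝ (Γ : Set F)
  have := hs_li.setFinite.fintype
  let B : Module.Basis s ℝ F := .mk hs_li (by rw [Subtype.range_coe, hs_span, hspan])
  have hBΓ : Submodule.span ℤ (Set.range B) ≤ Γ.toIntSubmodule := by
    rw [Submodule.span_le, Module.Basis.coe_mk, Subtype.range_coe]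
    exact hsΓ
  refine ⟨closedBall 0 (∑ i, ‖B i‖), isCompact_closedBall _ _, fun m => ?_⟩
  refine ⟨-m + ZSpan.fract B m,
    hBΓ ((ZSpan.fract_eq_fract B m _).mp (ZSpan.fract_fract B m).symm), ?_⟩
  rw [add_neg_cancel_left, mem_closedBall_zero_iff]
  exact ZSpan.norm_fract_le B m

theorem IsPreconnected.exists_dist_eq {α : Type*} [PseudoMetricSpace α] {K : Set α}
    (hK : IsPreconnected K) {a : α} (ha : a ∈ K) {r : ℝ} (hr : 0 ≤ r)
    (hdiam : ENNReal.ofReal (2 * r) < ediam K) : ∃ u ∈ K, dist u a = r := by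
  obtain ⟨b, hbK, hb⟩ : ∃ b ∈ K, r ≤ dist b a := by
    by_contra! h
    refine hdiam.not_ge ?_
    calc ediam K ≤ ediam (closedEBall a (ENNReal.ofReal r)) := ediam_mono fun b hb => by
          rw [mem_closedEBall, edist_dist]
          exact ENNReal.ofReal_le_ofReal (h b hb).le
      _ ≤ 2 * ENNReal.ofReal r := ediam_closedEBall_le
      _ = ENNReal.ofReal (2 * r) := by rw [ENNReal.ofReal_mul zero_le_two, ENNReal.ofReal_ofNat]
  exact hK.intermediate_value ha hbK (continuous_id.dist continuous_const).continuousOn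
    ⟨by simpa using hr, hb⟩

theorem dist_lt_of_mem_of_ediam_lt {α : Type*} [PseudoMetricSpace α] {s : Set α} {x y : α}
    (hx : x ∈ s) (hy : y ∈ s) {δ : ℝ} (hδ : ediam s < ENNReal.ofReal δ) : dist x y < δ := by
  rw [← ENNReal.ofReal_lt_ofReal_iff_of_nonneg dist_nonneg, ← edist_dist]
  exact (edist_le_ediam_of_mem hx hy).trans_lt hδ

theorem Continuous.apply_eq_of_tendsto_dist_apply {α β ι : Type*} [TopologicalSpace α]
    [MetricSpace β] {f : α → β} (hf : Continuous f) {l : Filter ι} [l.NeBot] {u x : ι → α}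
    {b a : α} (hu : Tendsto u l (𝓝 b)) (hx : Tendsto x l (𝓝 a))
    (h : Tendsto (fun n => dist (f (u n)) (f (x n))) l (𝓝 0)) : f b = f a :=
  dist_eq_zero.mp <|
    tendsto_nhds_unique (((hf.tendsto b).comp hu).dist ((hf.tendsto a).comp hx)) h

theorem IsCompact.exists_pos_ediam_lt_of_ediam_image_lt {α X : Type*} [MetricSpace α]
    [ProperSpace α] [MetricSpace X] {Θ : α → X} (hΘ : Continuous Θ)
    (hfib : ∀ x, ∃ ρ > 0, ∀ y, Θ y = Θ x → dist y x < ρ → y = x)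
    {C : Set α} (hC : IsCompact C) {ε : ℝ} (hε : 0 < ε) :
    ∃ δ > 0, ∀ K : Set α, IsPreconnected K → (K ∩ C).Nonempty →
      ediam (Θ '' K) < ENNReal.ofReal δ → ediam K < ENNReal.ofReal ε := by
  by_contra! h
  choose K hKconn hKC hΘK hK using fun n : ℕ => h (1 / (n + 1)) Nat.one_div_pos_of_nat
  choose x hxK hxC using hKC
  obtain ⟨a, -, φ, hφ, hxa⟩ := hC.tendsto_subseq hxC
  obtain ⟨ρ, hρ, ha⟩ := hfib a
  set r := min (ε / 4) (ρ / 2)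
  have hr : 0 < r := lt_min (by linarith) (by linarith)
  have h2r : ∀ n, ENNReal.ofReal (2 * r) < ediam (K n) := fun n =>
    ((ENNReal.ofReal_lt_ofReal_iff hε).mpr (by linarith [min_le_left (ε / 4) (ρ / 2)])).trans_le
      (hK n)
  choose u huK hux using fun n => (hKconn n).exists_dist_eq (hxK n) hr.le (h2r n)
  obtain ⟨b, -, ψ, hψ, hub⟩ := (hC.cthickening (r := r)).tendsto_subseq
    fun n => mem_cthickening_of_dist_le (u (φ n)) (x (φ n)) r C (hxC _) (hux _).le
  have hxa' : Tendsto (x ∘ φ ∘ ψ) atTop (𝓝 a) := hxa.comp hψ.tendsto_atTop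
  have hba : dist b a = r :=
    tendsto_nhds_unique (hub.dist hxa') <| by
      simp only [Function.comp_apply, hux, tendsto_const_nhds]
  have hΘux : ∀ n, dist (Θ (u n)) (Θ (x n)) ≤ 1 / (n + 1) := fun n =>
    (dist_lt_of_mem_of_ediam_lt (Set.mem_image_of_mem Θ (huK n))
      (Set.mem_image_of_mem Θ (hxK n)) (hΘK n)).le
  have hΘba : Θ b = Θ a := hΘ.apply_eq_of_tendsto_dist_apply hub hxa' <|
    squeeze_zero (fun _ => dist_nonneg) (fun _ => hΘux _)
      (tendsto_one_div_add_atTop_nhds_zero_nat.comp (hφ.comp hψ).tendsto_atTop)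
  have hba' : b = a := ha b hΘba (hba ▸ (min_le_right _ _).trans_lt (half_lt_self hρ))
  rw [hba', dist_self] at hba
  exact hr.ne hba

theorem stmt9_general {X : Type*} [MetricSpace X] (Γ : AddSubgroup E)
    (hspan : Submodule.span ℝ (Γ : Set E) = ⊤)
    (Θ : E → X) (hcont : Continuous Θ)
    (hper : ∀ u : E, ∀ γ ∈ Γ, Θ (u + γ) = Θ u)
    (hfib : ∀ p : X, ∀ x ∈ Θ ⁻¹' {p}, ∃ ε > 0, ∀ y ∈ Θ ⁻¹' {p}, ‖y - x‖ < ε → y = x) :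
    ∀ ε : ℝ, 0 < ε → ∃ δ : ℝ, 0 < δ ∧ ∀ K : Set E, IsConnected K →
      EMetric.diam (Θ '' K) < ENNReal.ofReal δ → EMetric.diam K < ENNReal.ofReal ε := by
  intro ε hε
  obtain ⟨C, hC, hΓC⟩ := Γ.exists_isCompact_add_mem hspan
  have hfib' : ∀ x, ∃ ρ > 0, ∀ y, Θ y = Θ x → dist y x < ρ → y = x := fun x => by
    obtain ⟨ρ, hρ, h⟩ := hfib (Θ x) x rfl
    exact ⟨ρ, hρ, fun y hy hyx => h y hy (by rwa [← dist_eq_norm])⟩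
  obtain ⟨δ, hδ, hδK⟩ := hC.exists_pos_ediam_lt_of_ediam_image_lt hcont hfib' hε
  refine ⟨δ, hδ, fun K hK hΘK => ?_⟩
  obtain ⟨a, ha⟩ := hK.nonempty
  obtain ⟨γ, hγ, haγ⟩ := hΓC a
  have himage : Θ '' ((· + γ) '' K) = Θ '' K := by
    rw [Set.image_image]
    exact Set.image_congr fun u _ => hper u γ hγ
  change ediam K < _
  rw [← (isometry_add_right γ).ediam_image K]
  exact hδK _ (hK.isPreconnected.image _ (continuous_add_const γ).continuousOn)
    ⟨a + γ, ⟨a, ha, rfl⟩, haγ⟩ (himage ▸ hΘK)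

theorem stmt9 {X : Type*} [MetricSpace X] (Γ : AddSubgroup E) [DiscreteTopology Γ]
    (hspan : Submodule.span ℝ (Γ : Set E) = ⊤)
    (Θ : E → X) (hcont : Continuous Θ)
    (hper : ∀ u : E, ∀ γ ∈ Γ, Θ (u + γ) = Θ u)
    (hfib : ∀ p : X, ∀ x ∈ Θ ⁻¹' {p}, ∃ ε > 0, ∀ y ∈ Θ ⁻¹' {p}, ‖y - x‖ < ε → y = x) :
    ∀ ε : ℝ, 0 < ε → ∃ δ : ℝ, 0 < δ ∧ ∀ K : Set E, IsConnected K →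
      EMetric.diam (Θ '' K) < ENNReal.ofReal δ → EMetric.diam K < ENNReal.ofReal ε :=
  stmt9_general Γ hspan Θ hcont hper hfib
end
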